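/- arXiv:2602.17253 — 2 statements merged into one kernel-verified Lean document; each statement's English description precedes it below -/
import Mathlib

section
/- Let G be a connected graph on n ≥ 3 vertices with incidence (boundary) matrix ∂_1. Then the symmetric cohomology polytope P^G = conv[∂_1ᵀ | −∂_1ᵀ] is unimodularly equivalent to the symmetric edge polytope of the cycle C_n on n vertices. -/
open Matrix BigOperators Pointwise

/-- An abstract simplicial complex on vertex set `Fin n`. -/
structure SC (n : ℕ) where
  faces : Finset (Finset (Fin n))
  down_closed : ∀ σ ∈ faces, ∀ τ, τ ⊆ σ → τ.Nonempty → τ ∈ faces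
  face_nonempty : ∀ σ ∈ faces, σ.Nonempty

namespace SC

variable {n : ℕ}

/-- `K` is `d`-dimensional. -/
def dimIs (K : SC n) (d : ℕ) : Prop :=
  (∀ σ ∈ K.faces, σ.card ≤ d + 1) ∧ ∃ σ ∈ K.faces, σ.card = d + 1

/-- `K` is pure of dimension `d`. -/
def pure (K : SC n) (d : ℕ) : Prop :=
  ∀ σ ∈ K.faces, ∃ τ ∈ K.faces, σ ⊆ τ ∧ τ.card = d + 1

/-- The `j`-dimensional faces of `K`. -/
abbrev fdex (K : SC n) (j : ℕ) : Type := {σ : Finset (Fin n) // σ ∈ K.faces ∧ σ.card = j + 1}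

end SC

/-- Entry of the simplicial boundary matrix: for a codimension-one subface `τ ⊆ σ`,
the sign `(-1)^k` where `k` is the position of the vertex removed from `σ`. -/
def bEntry {n : ℕ} (τ σ : Finset (Fin n)) : ℤ :=
  if τ ⊆ σ ∧ σ.card = τ.card + 1 then
    ∑ v ∈ σ \ τ, (-1 : ℤ) ^ ((σ.filter fun w => w < v).card)
  else 0

/-- The boundary matrix from `(j+1)`-dimensional faces to `j`-dimensional faces,
i.e. the boundary map `∂_{j+2}`… no: `K.B j` is the map `∂` whose columns are indexed
by the `(j+1)`-faces; in homological notation `K.B (d-1)` is `∂_d`. -/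
def SC.B {n : ℕ} (K : SC n) (j : ℕ) : Matrix (K.fdex j) (K.fdex (j + 1)) ℤ :=
  fun τ σ => bEntry τ.1 σ.1

/-- Strong connectivity of a `(j+1)`-dimensional pure complex: any two facets are
connected by a chain of facets successively sharing a ridge. -/
def SC.StronglyConnected {n : ℕ} (K : SC n) (j : ℕ) : Prop :=
  ∀ a b : K.fdex (j + 1),
    Relation.ReflTransGen (fun σ σ' : K.fdex (j + 1) => (σ.1 ∩ σ'.1).card = j + 1) a b

/-- the number of facets (of a `(j+1)`-dimensional complex) containing a given ridge -/
def SC.ridgeDeg {n : ℕ} (K : SC n) (j : ℕ) (τ : K.fdex j) : ℕ :=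
  (Finset.univ.filter fun σ : K.fdex (j + 1) => τ.1 ⊆ σ.1).card

section Poly

variable {ι κ : Type*} [Fintype ι] [Fintype κ]

def dot (x y : ι → ℝ) : ℝ := ∑ i, x i * y i

/-- the columns of `A` and their negatives, as real vectors -/
def colsPM (A : Matrix ι κ ℤ) : Set (ι → ℝ) :=
  {x | ∃ j : κ, x = (fun i => (A i j : ℝ)) ∨ x = fun i => -(A i j : ℝ)}

/-- the centrally symmetric polytope `conv [A | -A]` -/
def symPoly (A : Matrix ι κ ℤ) : Set (ι → ℝ) := convexHull ℝ (colsPM A)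

def intVec (x : ι → ℝ) : Prop := ∀ i, ∃ z : ℤ, x i = (z : ℝ)

def latticePts (P : Set (ι → ℝ)) : Set (ι → ℝ) := {x ∈ P | intVec x}

/-- a set is a lattice polytope iff it is the convex hull of its lattice points -/
def IsLatticePolytope (Q : Set (ι → ℝ)) : Prop := Q = convexHull ℝ (latticePts Q)

/-- the polar dual, taken within the linear span of `P` -/
def polarIn (P : Set (ι → ℝ)) : Set (ι → ℝ) :=
  {y | y ∈ Submodule.span ℝ P ∧ ∀ x ∈ P, dot x y ≤ 1}

/-- `P` is reflexive: its polar dual (within the affine hull of `P`) is a lattice polytope -/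
def IsReflexive (P : Set (ι → ℝ)) : Prop := IsLatticePolytope (polarIn P)

/-- every lattice point of the span of `P` is an integer combination of lattice points of `P` -/
def IsSpanning (P : Set (ι → ℝ)) : Prop :=
  ∀ x : ι → ℝ, intVec x → x ∈ Submodule.span ℝ P →
    x ∈ (Submodule.span ℤ (latticePts P) : Set (ι → ℝ))

/-- the integer decomposition property -/
def IsIDP (P : Set (ι → ℝ)) : Prop :=
  ∀ k : ℕ, ∀ x : ι → ℝ, intVec x → x ∈ (k : ℝ) • P →
    ∃ f : Fin k → (ι → ℝ), (∀ i, f i ∈ latticePts P) ∧ x = ∑ i, f i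

/-- combinatorial equivalence: an inclusion-order isomorphism between the
posets of exposed faces -/
def CombEquiv (P : Set (ι → ℝ)) (Q : Set (κ → ℝ)) : Prop :=
  Nonempty ({F : Set (ι → ℝ) // IsExposed ℝ P F} ≃o {F : Set (κ → ℝ) // IsExposed ℝ Q F})

/-- unimodular equivalence: an affine isomorphism between the affine hulls which
matches up the two polytopes and the lattice points of the affine hulls -/
def UniEquiv (P : Set (ι → ℝ)) (Q : Set (κ → ℝ)) : Prop :=
  ∃ f : (ι → ℝ) →ᵃ[ℝ] (κ → ℝ),
    Set.BijOn f (affineSpan ℝ P : Set (ι → ℝ)) (affineSpan ℝ Q : Set (κ → ℝ)) ∧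
    f '' P = Q ∧
    (∀ x ∈ (affineSpan ℝ P : Set (ι → ℝ)), intVec x → intVec (f x)) ∧
    (∀ y ∈ (affineSpan ℝ Q : Set (κ → ℝ)), intVec y →
      ∃ x ∈ (affineSpan ℝ P : Set (ι → ℝ)), intVec x ∧ f x = y)

/-- the facets of a polytope: the maximal proper exposed faces -/
def polyFacets (P : Set (ι → ℝ)) : Set (Set (ι → ℝ)) :=
  {F | IsExposed ℝ P F ∧ F ⊂ P ∧ ∀ G, IsExposed ℝ P G → F ⊆ G → G ⊂ P → G = F}

/-- independence of a set of columns of a rational matrix -/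
def colsIndep (A : Matrix ι κ ℚ) (S : Set κ) : Prop :=
  LinearIndependent ℚ (fun j : S => (fun i => A i (j : κ)))

/-- `S` is a basis of the column matroid `M[A]` -/
def IsBasisSet (A : Matrix ι κ ℚ) (S : Set κ) : Prop :=
  colsIndep A S ∧ ∀ S' : Set κ, S ⊆ S' → colsIndep A S' → S' = S

end Poly

/-- the standard cross-polytope -/
def stdCross (s : ℕ) : Set (Fin s → ℝ) :=
  convexHull ℝ {x | ∃ i : Fin s, x = Pi.single i 1 ∨ x = Pi.single i (-1)}

/-- a signed incidence matrix of the cycle on `n` vertices: column `j` is `e_{j+1} - e_j` -/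
def cycMat (n : ℕ) : Matrix (Fin n) (Fin n) ℤ :=
  fun i j => (if (i : ℕ) = ((j : ℕ) + 1) % n then 1 else 0) - (if i = j then 1 else 0)

/-- a signed incidence matrix of the facet-ridge graph of a `(j+1)`-dimensional
pseudomanifold without boundary: rows are facets, columns are ridges, and the two
facets containing a ridge receive opposite signs. -/
noncomputable def SC.frg {n : ℕ} (K : SC n) (j : ℕ) :
    Matrix (K.fdex (j + 1)) (K.fdex j) ℤ :=
  fun σ τ =>
    if τ.1 ⊆ σ.1 then
      (if ∀ σ' : K.fdex (j + 1), τ.1 ⊆ σ'.1 → σ' ≠ σ →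
          (σ'.1 \ τ.1).min ≤ (σ.1 \ τ.1).min then 1 else -1)
    else 0

/-!
Both polytopes are `conv [A | -A]` for integer matrices with the vertices of `G` as column
index: `A = ∂_1ᵀ` and the cycle matrix `C`. Integer matrices `M`, `N` with `M A = C` and
`N C = A` make `x ↦ M x` a lattice-preserving affine isomorphism between the affine hulls
carrying one polytope onto the other. Row `i` of `M` is an integer flow along a path from
`i` to `i - 1` in `G`, which exists by connectivity; row `e` of `N` is the sequence of
prefix sums of row `e` of `A`, which closes up cyclically because every row of `∂_1ᵀ` sums
to zero.
-/

lemma uniEquiv_convexHull_of_leftInvOn {ι κ : Type*} [Fintype ι] [Fintype κ]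
    {s : Set (ι → ℝ)} {t : Set (κ → ℝ)}
    (f : (ι → ℝ) →ᵃ[ℝ] (κ → ℝ)) (g : (κ → ℝ) →ᵃ[ℝ] (ι → ℝ))
    (hfs : f '' s = t) (hgf : Set.LeftInvOn g f s)
    (hf : ∀ x, intVec x → intVec (f x)) (hg : ∀ y, intVec y → intVec (g y)) :
    UniEquiv (convexHull ℝ s) (convexHull ℝ t) := by
  have hspan : f '' affineSpan ℝ s = affineSpan ℝ t := by
    rw [← AffineSubspace.coe_map, AffineSubspace.map_span, hfs]
  have hinv : Set.LeftInvOn g f (affineSpan ℝ s) :=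
    AffineMap.eqOn_affineSpan (f := g.comp f) (g := AffineMap.id ℝ _) hgf
  rw [UniEquiv, affineSpan_convexHull, affineSpan_convexHull]
  refine ⟨f, hspan ▸ hinv.injOn.bijOn_image, by rw [f.image_convexHull, hfs],
    fun x _ hx => hf x hx, fun y hy hyint => ?_⟩
  obtain ⟨x, hx, rfl⟩ := hspan ▸ hy
  exact ⟨x, hx, hinv hx ▸ hg _ hyint, rfl⟩

lemma intVec_mulVec {ι ι' : Type*} [Fintype ι] (M : Matrix ι' ι ℤ) {x : ι → ℝ}
    (hx : intVec x) : intVec (M.map (Int.cast : ℤ → ℝ) *ᵥ x) := by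
  choose z hz using hx
  intro i
  exact ⟨∑ j, M i j * z j, by simp [mulVec, dotProduct, hz]⟩

lemma mulVec_intCast_col {ι ι' κ : Type*} [Fintype ι] (M : Matrix ι' ι ℤ) (A : Matrix ι κ ℤ)
    (j : κ) :
    M.map (Int.cast : ℤ → ℝ) *ᵥ (fun i => (A i j : ℝ)) = fun i => ((M * A) i j : ℝ) := by
  ext i
  simp [mulVec, dotProduct, mul_apply]

lemma mem_colsPM {ι κ : Type*} [Fintype ι] [Fintype κ] {A : Matrix ι κ ℤ} {x : ι → ℝ} :
    x ∈ colsPM A ↔ ∃ j, x = (fun i => (A i j : ℝ)) ∨ x = -fun i => (A i j : ℝ) :=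
  Iff.rfl

lemma image_colsPM {ι ι' κ : Type*} [Fintype ι] [Fintype ι'] [Fintype κ]
    (M : Matrix ι' ι ℤ) (A : Matrix ι κ ℤ) :
    (M.map (Int.cast : ℤ → ℝ)).mulVecLin '' colsPM A = colsPM (M * A) := by
  ext y
  simp only [Set.mem_image, mem_colsPM, mulVecLin_apply]
  constructor
  · rintro ⟨x, ⟨j, rfl | rfl⟩, rfl⟩
    · exact ⟨j, Or.inl (mulVec_intCast_col M A j)⟩
    · exact ⟨j, Or.inr (by rw [mulVec_neg, mulVec_intCast_col])⟩
  · rintro ⟨j, rfl | rfl⟩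
    · exact ⟨_, ⟨j, Or.inl rfl⟩, mulVec_intCast_col M A j⟩
    · exact ⟨_, ⟨j, Or.inr rfl⟩, by rw [mulVec_neg, mulVec_intCast_col]⟩

lemma uniEquiv_symPoly_of_mul_eq {ι ι' κ : Type*} [Fintype ι] [Fintype ι'] [Fintype κ]
    {A : Matrix ι κ ℤ} {C : Matrix ι' κ ℤ} (M : Matrix ι' ι ℤ) (N : Matrix ι ι' ℤ)
    (hM : M * A = C) (hN : N * C = A) :
    UniEquiv (symPoly A) (symPoly C) := by
  refine uniEquiv_convexHull_of_leftInvOn (M.map (Int.cast : ℤ → ℝ)).mulVecLin.toAffineMap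
    (N.map (Int.cast : ℤ → ℝ)).mulVecLin.toAffineMap (by simp [image_colsPM, hM]) ?_
    (fun x => intVec_mulVec M) (fun y => intVec_mulVec N)
  have hcol : ∀ j, N.map (Int.cast : ℤ → ℝ) *ᵥ (M.map (Int.cast : ℤ → ℝ) *ᵥ
      fun i => (A i j : ℝ)) = fun i => (A i j : ℝ) := by
    intro j
    rw [mulVec_intCast_col, hM, mulVec_intCast_col, hN]
  rintro x ⟨j, rfl | rfl⟩
  · exact hcol j
  · change N.map _ *ᵥ (M.map _ *ᵥ -_) = _
    rw [mulVec_neg, mulVec_neg, hcol]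
    rfl

lemma symPoly_submatrix_of_surjective {ι κ κ' : Type*} [Fintype ι] [Fintype κ] [Fintype κ']
    (A : Matrix ι κ ℤ) {e : κ' → κ} (he : Function.Surjective e) :
    symPoly (A.submatrix id e) = symPoly A := by
  unfold symPoly
  congr 1
  ext x
  simp only [mem_colsPM, submatrix_apply, id_eq]
  constructor
  · rintro ⟨j, hj⟩
    exact ⟨e j, hj⟩
  · rintro ⟨j, hj⟩
    obtain ⟨k, rfl⟩ := he j
    exact ⟨k, hj⟩

lemma cycMat_apply {n : ℕ} [NeZero n] (i j : Fin n) :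
    cycMat n i j = (if i = j + 1 then 1 else 0) - (if i = j then 1 else 0) := by
  have : ((j + 1 : Fin n) : ℕ) = ((j : ℕ) + 1) % n := by
    simp [Fin.val_add, Nat.add_mod]
  simp [cycMat, Fin.ext_iff, this]

lemma sum_mul_cycMat {n : ℕ} [NeZero n] (x : Fin n → ℤ) (v : Fin n) :
    ∑ j, x j * cycMat n j v = x (v + 1) - x v := by
  simp [cycMat_apply, mul_sub, Finset.sum_sub_distrib]

lemma sum_Iio_add_one_sub_sum_Iio {M : Type*} [AddCommGroup M] {n : ℕ} [NeZero n]
    (g : Fin n → M) (hg : ∑ u, g u = 0) (v : Fin n) :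
    ∑ u ∈ Finset.Iio (v + 1), g u - ∑ u ∈ Finset.Iio v, g u = g v := by
  have hval : ((v + 1 : Fin n) : ℕ) = ((v : ℕ) + 1) % n := by
    simp [Fin.val_add, Nat.add_mod]
  by_cases hv : (v : ℕ) + 1 < n
  · have : Finset.Iio (v + 1) = insert v (Finset.Iio v) := by
      ext u
      simp only [Finset.mem_Iio, Finset.mem_insert, Fin.lt_def, Fin.ext_iff, hval,
        Nat.mod_eq_of_lt hv]
      omega
    rw [this, Finset.sum_insert Finset.notMem_Iio_self, add_sub_cancel_right]
  · have h0 : Finset.Iio (v + 1) = ∅ := by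
      ext u
      simp only [Finset.mem_Iio, Fin.lt_def, hval, show (v : ℕ) + 1 = n by omega, Nat.mod_self,
        Finset.notMem_empty, iff_false]
      omega
    have hlast : Finset.Iio v = Finset.univ.erase v := by
      ext u
      simp only [Finset.mem_Iio, Finset.mem_erase, Finset.mem_univ, and_true, Fin.lt_def,
        ne_eq, Fin.ext_iff]
      omega
    rw [h0, hlast, Finset.sum_erase_eq_sub (Finset.mem_univ v), hg]
    simp

lemma exists_mul_cycMat_eq {ι : Type*} {n : ℕ} [NeZero n] (A : Matrix ι (Fin n) ℤ)
    (hA : ∀ i, ∑ j, A i j = 0) : ∃ N : Matrix ι (Fin n) ℤ, N * cycMat n = A :=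
  ⟨Matrix.of fun i j => ∑ u ∈ Finset.Iio j, A i u, by
    ext i v
    simp only [mul_apply, of_apply]
    rw [sum_mul_cycMat, sum_Iio_add_one_sub_sum_Iio _ (hA i)]⟩

lemma bEntry_singleton_pair {n : ℕ} {b c : Fin n} (hbc : b < c) (u : Fin n) :
    bEntry {u} {b, c} = (if u = c then 1 else 0) - (if u = b then 1 else 0) := by
  unfold bEntry
  by_cases hub : u = b
  · subst hub
    simp [hbc, hbc.ne, Finset.filter_insert, Finset.filter_singleton]
  by_cases huc : u = c
  · subst huc
    simp [hbc.ne, hbc.ne', hbc.not_gt, Finset.filter_insert, Finset.filter_singleton]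
  · rw [if_neg fun h => by simpa [hub, huc] using h.1]
    simp [hub, huc]

lemma sum_bEntry_singleton_eq_zero {n : ℕ} {σ : Finset (Fin n)} (hσ : σ.card = 2) :
    ∑ u, bEntry {u} σ = 0 := by
  obtain ⟨b, c, hbc, rfl⟩ := Finset.card_eq_two.mp hσ
  rcases hbc.lt_or_gt with h | h
  · simp [bEntry_singleton_pair h, Finset.sum_sub_distrib]
  · simp [Finset.pair_comm b c, bEntry_singleton_pair h, Finset.sum_sub_distrib]

namespace SC

variable {n : ℕ} (K : SC n)

def singletonFace {v : Fin n} (hv : {v} ∈ K.faces) : K.fdex 0 :=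
  ⟨{v}, hv, Finset.card_singleton v⟩

lemma singletonFace_surjective (hvert : ∀ v : Fin n, {v} ∈ K.faces) :
    Function.Surjective fun v => K.singletonFace (hvert v) := by
  intro τ
  obtain ⟨w, hw⟩ := Finset.card_eq_one.mp τ.2.2
  exact ⟨w, Subtype.ext hw.symm⟩

lemma exists_B_mulVec_eq {u v : Fin n}
    (h : Relation.ReflTransGen
      (fun a b : Fin n => a ≠ b ∧ ({a, b} : Finset (Fin n)) ∈ K.faces) u v) :
    ∃ F : K.fdex 1 → ℤ, ∀ w (hw : {w} ∈ K.faces),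
      (K.B 0 *ᵥ F) (K.singletonFace hw) = (if w = v then 1 else 0) - (if w = u then 1 else 0) := by
  induction h with
  | refl => exact ⟨0, fun w hw => by simp⟩
  | @tail b c _ hbc ih =>
    obtain ⟨F, hF⟩ := ih
    obtain ⟨hne, hmem⟩ := hbc
    obtain ⟨s, hs⟩ : ∃ s : ℤ, ∀ w : Fin n,
        bEntry {w} {b, c} * s = (if w = c then 1 else 0) - (if w = b then 1 else 0) := by
      rcases hne.lt_or_gt with h | h
      · exact ⟨1, fun w => by rw [bEntry_singleton_pair h, mul_one]⟩
      · exact ⟨-1, fun w => by rw [Finset.pair_comm, bEntry_singleton_pair h]; ring⟩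
    refine ⟨F + Pi.single ⟨{b, c}, hmem, Finset.card_pair hne⟩ s, fun w hw => ?_⟩
    rw [mulVec_add, Pi.add_apply, hF w hw, mulVec_single]
    change _ + bEntry {w} {b, c} * s = _
    rw [hs]
    ring

lemma exists_mul_B_eq_cycMat [NeZero n] (hvert : ∀ v : Fin n, {v} ∈ K.faces)
    (hconn : ∀ u v : Fin n,
      Relation.ReflTransGen
        (fun a b : Fin n => a ≠ b ∧ ({a, b} : Finset (Fin n)) ∈ K.faces) u v) :
    ∃ M : Matrix (Fin n) (K.fdex 1) ℤ,
      M * (K.B 0)ᵀ.submatrix id (fun v => K.singletonFace (hvert v)) = cycMat n := by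
  choose F hF using fun i => K.exists_B_mulVec_eq (hconn i (i - 1))
  refine ⟨Matrix.of F, ?_⟩
  ext i v
  have := hF i v (hvert v)
  simp only [mulVec, dotProduct] at this
  simp only [mul_apply, of_apply, submatrix_apply, transpose_apply, id_eq, mul_comm (F i _),
    this, cycMat_apply, eq_sub_iff_add_eq, eq_comm]

end SC

theorem stmt16_general (n : ℕ) (hn : 3 ≤ n) (K : SC n)
    (hvert : ∀ v : Fin n, ({v} : Finset (Fin n)) ∈ K.faces)
    (hconn : ∀ u v : Fin n,
      Relation.ReflTransGen
        (fun a b : Fin n => a ≠ b ∧ ({a, b} : Finset (Fin n)) ∈ K.faces) u v) :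
    UniEquiv (symPoly (K.B 0)ᵀ) (symPoly (cycMat n)) := by
  have : NeZero n := ⟨by omega⟩
  rw [← symPoly_submatrix_of_surjective _ (K.singletonFace_surjective hvert)]
  obtain ⟨M, hM⟩ := K.exists_mul_B_eq_cycMat hvert hconn
  obtain ⟨N, hN⟩ := exists_mul_cycMat_eq _ fun e : K.fdex 1 => sum_bEntry_singleton_eq_zero e.2.2
  exact uniEquiv_symPoly_of_mul_eq M N hM hN

/-- Let `G` be a connected graph (a 1-dimensional simplicial
complex containing all vertices) on `n ≥ 3` vertices with incidence matrix
`∂_1 = K.B 0`. Then `P^G = conv[∂_1ᵀ | −∂_1ᵀ]` is unimodularly equivalent to the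
symmetric edge polytope of the cycle `C_n`. -/
theorem stmt16 (n : ℕ) (hn : 3 ≤ n) (K : SC n)
    (hdim : K.dimIs 1)
    (hvert : ∀ v : Fin n, ({v} : Finset (Fin n)) ∈ K.faces)
    (hconn : ∀ u v : Fin n,
      Relation.ReflTransGen
        (fun a b : Fin n => a ≠ b ∧ ({a, b} : Finset (Fin n)) ∈ K.faces) u v) :
    UniEquiv (symPoly (K.B 0)ᵀ) (symPoly (cycMat n)) :=
  stmt16_general n hn K hvert hconn
end

section
/- Let Δ be a d-dimensional orientable pseudomanifold without boundary with s facets and facet-ridge graph G. Then (1) the symmetric homology polytope P_Δ is unimodularly equivalent to the symmetric edge polytope of the cycle C_s, and (2) the symmetric cohomology polytope P^Δ is unimodularly equivalent to the symmetric edge polytope of G. -/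
open Matrix BigOperators Pointwise

/-!
Since every ridge lies in exactly two facets, on which `∂_d` has entries `±1`, the coordinates of
a cycle on two adjacent facets agree up to sign; by strong connectivity a nonzero integral cycle
has entries of constant absolute value, and its sign vector `ε` is a cycle with entries `±1`.

(1) Reorder the columns of the incidence matrix of `C_s` along a bijection of the facets with
`Fin s` and multiply them by `ε`; this does not change its symmetric edge polytope. This matrix
and `∂_d` both have kernel `ℝ ε`, and for both a real vector with integral image which is
integral at one coordinate is integral (propagate along adjacent facets, resp. around the cycle).
Hence the new matrix is `L ∘ ∂_d` for a linear map `L` that is a lattice isomorphism between the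
two column spans, and `L` carries `P_Δ` onto the symmetric edge polytope of `C_s`.

(2) Multiplying the rows of `∂_dᵀ` by `ε` makes the two nonzero entries of every column opposite,
which is the signed incidence matrix of `G` up to column signs; `diag ε` is a lattice
automorphism.
-/

section SymmetricPolytopes

variable {ι ι' κ κ' : Type*}

abbrev Matrix.toReal (A : Matrix ι κ ℤ) : Matrix ι κ ℝ := A.map (↑)

lemma intVec_toReal_mulVec [Fintype κ] (A : Matrix ι κ ℤ) {a : κ → ℝ} (ha : intVec a) :
    intVec (A.toReal *ᵥ a) := by
  choose b hb using ha
  obtain rfl : a = fun k => (b k : ℝ) := funext hb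
  exact fun i => ⟨(A *ᵥ b) i, by simp [Matrix.mulVec, dotProduct]⟩

lemma colsPM_eq (A : Matrix ι κ ℤ) :
    colsPM A = Set.range A.toReal.col ∪ -Set.range A.toReal.col := by
  ext x
  simp only [colsPM, Set.mem_ofPred_eq, Set.mem_union, Set.mem_range, Set.mem_neg, exists_or]
  refine or_congr (exists_congr fun k => eq_comm) (exists_congr fun k => ?_)
  rw [eq_comm, ← neg_eq_iff_eq_neg]
  exact Iff.rfl

lemma span_colsPM [Fintype κ] (A : Matrix ι κ ℤ) :
    Submodule.span ℝ (colsPM A) = LinearMap.range A.toReal.mulVecLin := by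
  rw [colsPM_eq, Submodule.span_union, Submodule.span_neg, sup_idem, Matrix.range_mulVecLin]

lemma zero_mem_symPoly [Nonempty κ] (A : Matrix ι κ ℤ) : 0 ∈ symPoly A := by
  let v := A.toReal.col (Classical.arbitrary κ)
  have h := convex_convexHull ℝ (colsPM A) (subset_convexHull ℝ _ (⟨_, Or.inl rfl⟩ : v ∈ colsPM A))
    (subset_convexHull ℝ _ (⟨_, Or.inr rfl⟩ : -v ∈ colsPM A)) (by norm_num : (0 : ℝ) ≤ 1 / 2)
    (by norm_num : (0 : ℝ) ≤ 1 / 2) (by norm_num)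
  rwa [← smul_add, add_neg_cancel, smul_zero] at h

lemma coe_affineSpan_symPoly [Fintype κ] [Nonempty κ] (A : Matrix ι κ ℤ) :
    (affineSpan ℝ (symPoly A) : Set (ι → ℝ)) = LinearMap.range A.toReal.mulVecLin := by
  rw [← affineSpan_insert_eq_affineSpan ℝ (subset_affineSpan ℝ _ (zero_mem_symPoly A)),
    affineSpan_insert_zero, ← span_colsPM, symPoly]
  congr 1
  exact le_antisymm (Submodule.span_le.2 (convexHull_min Submodule.subset_span
    (Submodule.convex _))) (Submodule.span_mono (subset_convexHull ℝ _))

lemma image_symPoly (L : (ι → ℝ) →ₗ[ℝ] (ι' → ℝ)) {A : Matrix ι κ ℤ} {A' : Matrix ι' κ ℤ}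
    (h : ∀ k, L (A.toReal.col k) = A'.toReal.col k) : L '' symPoly A = symPoly A' := by
  rw [symPoly, symPoly, ← L.coe_toAffineMap, AffineMap.image_convexHull, L.coe_toAffineMap]
  have hneg : ∀ k, L (-A.toReal.col k) = -A'.toReal.col k := fun k => by rw [map_neg, h]
  congr 1
  ext x
  constructor
  · rintro ⟨_, ⟨k, rfl | rfl⟩, rfl⟩
    exacts [⟨k, Or.inl (h k)⟩, ⟨k, Or.inr (hneg k)⟩]
  · rintro ⟨k, rfl | rfl⟩
    exacts [⟨_, ⟨k, Or.inl rfl⟩, h k⟩, ⟨_, ⟨k, Or.inr rfl⟩, hneg k⟩]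

section ColumnSigns

variable {A : Matrix ι κ ℤ} {A' : Matrix ι κ' ℤ} (e : κ ≃ κ') (η : κ → ℤˣ)

lemma colsPM_subset_of_col_signs (h : ∀ i k, A i k = η k * A' i (e k)) :
    colsPM A ⊆ colsPM A' := by
  rintro x ⟨k, rfl | rfl⟩ <;> refine ⟨e k, ?_⟩ <;>
    rcases Int.units_eq_one_or (η k) with hη | hη <;> simp [h, hη]

lemma col_signs_symm (h : ∀ i k, A i k = η k * A' i (e k)) (i : ι) (k' : κ') :
    A' i k' = η (e.symm k') * A i (e.symm k') := by
  rw [h, e.apply_symm_apply, ← mul_assoc, Int.units_coe_mul_self, one_mul]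

lemma colsPM_eq_of_col_signs (h : ∀ i k, A i k = η k * A' i (e k)) : colsPM A = colsPM A' :=
  (colsPM_subset_of_col_signs e η h).antisymm
    (colsPM_subset_of_col_signs e.symm (η ∘ e.symm) (col_signs_symm e η h))

end ColumnSigns

lemma uniEquiv_image_linearEquiv (e : (ι → ℝ) ≃ₗ[ℝ] (ι' → ℝ))
    (he : ∀ x, intVec x → intVec (e x)) (he' : ∀ y, intVec y → intVec (e.symm y))
    (P : Set (ι → ℝ)) : UniEquiv P (e '' P) := by
  have hspan : (affineSpan ℝ (e '' P) : Set (ι' → ℝ)) = e '' affineSpan ℝ P := by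
    have := congrArg ((↑) : AffineSubspace ℝ (ι' → ℝ) → Set (ι' → ℝ))
      (AffineSubspace.map_span (e : (ι → ℝ) →ₗ[ℝ] (ι' → ℝ)).toAffineMap P)
    rw [AffineSubspace.coe_map] at this
    exact this.symm
  refine ⟨(e : (ι → ℝ) →ₗ[ℝ] (ι' → ℝ)).toAffineMap, ?_, rfl, fun x _ hx => he x hx, ?_⟩
  · rw [hspan]
    exact e.injective.injOn.bijOn_image
  · rw [hspan]
    rintro _ ⟨x, hx, rfl⟩ hy
    exact ⟨x, hx, by simpa using he' _ hy, rfl⟩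

end SymmetricPolytopes

theorem LinearMap.exists_comp_eq_of_ker_le {K V W W' : Type*} [Field K] [AddCommGroup V]
    [Module K V] [AddCommGroup W] [Module K W] [AddCommGroup W'] [Module K W']
    (T : V →ₗ[K] W) (S : V →ₗ[K] W') (h : ker T ≤ ker S) : ∃ L : W →ₗ[K] W', L ∘ₗ T = S := by
  obtain ⟨L, hL⟩ :=
    LinearMap.exists_extend ((ker T).liftQ S h ∘ₗ T.quotKerEquivRange.symm.toLinearMap)
  refine ⟨L, LinearMap.ext fun v => ?_⟩
  simpa [quotKerEquivRange_symm_apply_image] using LinearMap.congr_fun hL ⟨T v, mem_range_self T v⟩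

namespace Matrix

variable {ι ι' κ κ' : Type*} [Fintype κ] [Fintype κ']

def IntegralityPropagates (A : Matrix ι κ ℤ) (k₀ : κ) : Prop :=
  ∀ a : κ → ℝ, intVec (A.toReal *ᵥ a) → (∃ m : ℤ, a k₀ = m) → intVec a

lemma toReal_mulVec_of_col_signs {A : Matrix ι κ ℤ} {A' : Matrix ι κ' ℤ} (e : κ ≃ κ')
    (η : κ → ℤˣ) (h : ∀ i k, A i k = η k * A' i (e k)) (a : κ → ℝ) :
    A.toReal *ᵥ a = A'.toReal *ᵥ fun k' => (η (e.symm k') : ℝ) * a (e.symm k') := by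
  funext i
  simp only [mulVec, dotProduct, map_apply, h]
  rw [← e.symm.sum_comp]
  simp [mul_comm, mul_left_comm]

namespace IntegralityPropagates

variable {A : Matrix ι κ ℤ} {k₀ : κ}

/-- Every real multiple of `a` has integral image and vanishes at `k₀`, so it is integral. -/
lemma eq_zero (h : A.IntegralityPropagates k₀) {a : κ → ℝ} (ha : A.toReal *ᵥ a = 0)
    (ha₀ : a k₀ = 0) : a = 0 := by
  funext k
  by_contra hk
  change a k ≠ 0 at hk
  have hint : intVec (A.toReal *ᵥ ((2 * a k)⁻¹ • a)) := by
    rw [mulVec_smul, ha, smul_zero]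
    exact fun _ => ⟨0, by simp⟩
  obtain ⟨m, hm⟩ := h _ hint ⟨0, by simp [ha₀]⟩ k
  have : (2 * m : ℝ) = 1 := by
    rw [← hm, Pi.smul_apply, smul_eq_mul]
    field_simp
  have : 2 * m = 1 := by exact_mod_cast this
  omega

lemma eq_smul (h : A.IntegralityPropagates k₀) {u : κ → ℝ} (hu : A.toReal *ᵥ u = 0)
    (hu₀ : u k₀ = 1) {a : κ → ℝ} (ha : A.toReal *ᵥ a = 0) : a = a k₀ • u :=
  sub_eq_zero.1 <| h.eq_zero (by rw [mulVec_sub, mulVec_smul, ha, hu, smul_zero, sub_zero])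
    (by simp [hu₀])

lemma exists_intVec_mulVec_eq (h : A.IntegralityPropagates k₀) {u : κ → ℝ}
    (hu : A.toReal *ᵥ u = 0) (hu₀ : u k₀ = 1) {a : κ → ℝ} (ha : intVec (A.toReal *ᵥ a)) :
    ∃ b, intVec b ∧ A.toReal *ᵥ b = A.toReal *ᵥ a := by
  have hb : A.toReal *ᵥ (a - a k₀ • u) = A.toReal *ᵥ a := by
    rw [mulVec_sub, mulVec_smul, hu, smul_zero, sub_zero]
  exact ⟨_, h _ (hb ▸ ha) ⟨0, by simp [hu₀]⟩, hb⟩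

lemma of_col_signs {A' : Matrix ι κ' ℤ} (e : κ ≃ κ') (η : κ → ℤˣ)
    (h : ∀ i k, A i k = η k * A' i (e k)) (hA' : A'.IntegralityPropagates (e k₀)) :
    A.IntegralityPropagates k₀ := by
  intro a ha ⟨m₀, hm₀⟩
  rw [toReal_mulVec_of_col_signs e η h] at ha
  have hb := hA' _ ha ⟨η k₀ * m₀, by simp [hm₀]⟩
  intro k
  obtain ⟨m, hm⟩ := hb (e k)
  refine ⟨η k * m, ?_⟩
  simp only [Equiv.symm_apply_apply] at hm
  rw [Int.cast_mul, ← hm, ← mul_assoc, ← Int.cast_mul, Int.units_coe_mul_self, Int.cast_one,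
    one_mul]

end IntegralityPropagates

end Matrix

open Matrix

/-- Both kernels are `ℝ u`, so `A' = L ∘ A` for a linear map `L`, which restricts to a lattice
isomorphism between the column spans. -/
theorem uniEquiv_symPoly_of_integralityPropagates {ι ι' κ : Type*} [Fintype κ]
    {A : Matrix ι κ ℤ} {A' : Matrix ι' κ ℤ}
    {k₀ : κ} (hA : A.IntegralityPropagates k₀) (hA' : A'.IntegralityPropagates k₀)
    {u : κ → ℝ} (hu₀ : u k₀ = 1) (hAu : A.toReal *ᵥ u = 0) (hA'u : A'.toReal *ᵥ u = 0) :
    UniEquiv (symPoly A) (symPoly A') := by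
  have : Nonempty κ := ⟨k₀⟩
  classical
  let T := A.toReal.mulVecLin
  let S := A'.toReal.mulVecLin
  have hker : ∀ a, T a = 0 ↔ S a = 0 := fun a => by
    constructor <;> intro ha
    · change A'.toReal *ᵥ a = 0
      rw [hA.eq_smul hAu hu₀ ha, mulVec_smul, hA'u, smul_zero]
    · change A.toReal *ᵥ a = 0
      rw [hA'.eq_smul hA'u hu₀ ha, mulVec_smul, hAu, smul_zero]
  obtain ⟨L, hL⟩ := T.exists_comp_eq_of_ker_le S fun a ha => (hker a).1 ha
  have hLT : ∀ a, L (T a) = S a := LinearMap.congr_fun hL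
  refine ⟨L.toAffineMap, ?_, ?_, ?_, ?_⟩ <;>
    simp only [coe_affineSpan_symPoly, L.coe_toAffineMap]
  · refine ⟨?_, ?_, ?_⟩
    · rintro _ ⟨a, rfl⟩
      exact ⟨a, (hLT a).symm⟩
    · rintro _ ⟨a, rfl⟩ _ ⟨b, rfl⟩ hab
      rw [hLT, hLT, ← sub_eq_zero, ← map_sub, ← hker, map_sub, sub_eq_zero] at hab
      exact hab
    · rintro _ ⟨a, rfl⟩
      exact ⟨T a, ⟨a, rfl⟩, hLT a⟩
  · exact image_symPoly L fun k => by
      rw [← mulVec_single_one, ← mulVec_single_one]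
      exact hLT _
  · rintro _ ⟨a, rfl⟩ hint
    obtain ⟨b, hb, hTb⟩ := hA.exists_intVec_mulVec_eq hAu hu₀ hint
    change intVec (L (T a))
    rw [show T a = T b from hTb.symm, hLT]
    exact intVec_toReal_mulVec A' hb
  · rintro _ ⟨a, rfl⟩ hint
    obtain ⟨b, hb, hSb⟩ := hA'.exists_intVec_mulVec_eq hA'u hu₀ hint
    exact ⟨T b, ⟨b, rfl⟩, intVec_toReal_mulVec A hb, by rw [hLT]; exact hSb⟩

open Fin.NatCast in
lemma Fin.forall_of_add_one {s : ℕ} [NeZero s] {P : Fin s → Prop} (h : ∀ x, P x → P (x + 1))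
    {i₀ : Fin s} (h₀ : P i₀) (r : Fin s) : P r := by
  have key : ∀ k : ℕ, P (i₀ + (k : Fin s)) := by
    intro k
    induction k with
    | zero => simpa using h₀
    | succ k ih => simpa [add_assoc] using h _ ih
  simpa using key (r - i₀).val

section Cycle

variable {s : ℕ} [NeZero s]

lemma toReal_cycMat_mulVec (t : Fin s → ℝ) (r : Fin s) :
    ((cycMat s).toReal *ᵥ t) r = t (r - 1) - t r := by
  have hsucc : ∀ i : Fin s, (r : ℕ) = ((i : ℕ) + 1) % s ↔ i = r - 1 := fun i => by
    rw [eq_sub_iff_add_eq, eq_comm, Fin.ext_iff, Fin.val_add, Fin.val_one', Nat.add_mod_mod]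
  simp [mulVec, dotProduct, cycMat, hsucc, sub_mul, Finset.sum_sub_distrib]

lemma toReal_cycMat_mulVec_const (c : ℝ) : (cycMat s).toReal *ᵥ (fun _ => c) = 0 :=
  funext fun r => by rw [toReal_cycMat_mulVec, sub_self, Pi.zero_apply]

lemma integralityPropagates_cycMat (i₀ : Fin s) : (cycMat s).IntegralityPropagates i₀ := by
  intro t ht ht₀
  refine Fin.forall_of_add_one (fun r ⟨m, hm⟩ => ?_) ht₀
  obtain ⟨m', hm'⟩ := ht (r + 1)
  rw [toReal_cycMat_mulVec, add_sub_cancel_right, hm] at hm'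
  exact ⟨m - m', by push_cast; linarith⟩

end Cycle

namespace SC

variable {n j : ℕ} {K : SC n}

lemma B_eq_zero_of_not_subset {τ : K.fdex j} {σ : K.fdex (j + 1)} (h : ¬τ.1 ⊆ σ.1) :
    K.B j τ σ = 0 := by
  simp [SC.B, bEntry, h]

lemma frg_eq_zero_of_not_subset {τ : K.fdex j} {σ : K.fdex (j + 1)} (h : ¬τ.1 ⊆ σ.1) :
    K.frg j σ τ = 0 := by
  simp [SC.frg, h]

lemma exists_sdiff_eq_singleton {τ : K.fdex j} {σ : K.fdex (j + 1)} (h : τ.1 ⊆ σ.1) :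
    ∃ v, σ.1 \ τ.1 = {v} := by
  rw [← Finset.card_eq_one, Finset.card_sdiff_of_subset h, σ.2.2, τ.2.2]
  omega

lemma isUnit_B_of_subset {τ : K.fdex j} {σ : K.fdex (j + 1)} (h : τ.1 ⊆ σ.1) :
    IsUnit (K.B j τ σ) := by
  obtain ⟨v, hv⟩ := exists_sdiff_eq_singleton h
  rw [SC.B, bEntry, if_pos ⟨h, by rw [σ.2.2, τ.2.2]⟩, hv, Finset.sum_singleton]
  exact isUnit_neg_one.pow _

lemma exists_facets_of_ridgeDeg_eq_two {τ : K.fdex j} (hτ : K.ridgeDeg j τ = 2) :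
    ∃ σ₁ σ₂ : K.fdex (j + 1), σ₁ ≠ σ₂ ∧ ∀ σ, τ.1 ⊆ σ.1 ↔ σ = σ₁ ∨ σ = σ₂ := by
  obtain ⟨σ₁, σ₂, hne, hf⟩ := Finset.card_eq_two.1 hτ
  exact ⟨σ₁, σ₂, hne, fun σ => by simpa using Finset.ext_iff.1 hf σ⟩

lemma subset_iff_of_ridgeDeg_eq_two {τ : K.fdex j} (hτ : K.ridgeDeg j τ = 2)
    {σ₁ σ₂ : K.fdex (j + 1)} (hne : σ₁ ≠ σ₂) (h₁ : τ.1 ⊆ σ₁.1) (h₂ : τ.1 ⊆ σ₂.1) (σ) :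
    τ.1 ⊆ σ.1 ↔ σ = σ₁ ∨ σ = σ₂ := by
  obtain ⟨σ₁', σ₂', -, hτ'⟩ := exists_facets_of_ridgeDeg_eq_two hτ
  constructor
  · intro h
    rcases (hτ' σ).1 h with rfl | rfl <;> rcases (hτ' σ₁).1 h₁ with rfl | rfl <;>
      rcases (hτ' σ₂).1 h₂ with rfl | rfl <;> simp_all
  · rintro (rfl | rfl) <;> assumption

lemma toReal_B_mulVec_apply {τ : K.fdex j} {σ₁ σ₂ : K.fdex (j + 1)} (hne : σ₁ ≠ σ₂)
    (hτ : ∀ σ, τ.1 ⊆ σ.1 ↔ σ = σ₁ ∨ σ = σ₂) (a : K.fdex (j + 1) → ℝ) :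
    ((K.B j).toReal *ᵥ a) τ = K.B j τ σ₁ * a σ₁ + K.B j τ σ₂ * a σ₂ :=
  Fintype.sum_eq_add σ₁ σ₂ hne fun σ hσ => by
    simp [B_eq_zero_of_not_subset (mt (hτ σ).1 (not_or.2 hσ))]

lemma exists_ridge_of_adj {σ σ' : K.fdex (j + 1)} (h : (σ.1 ∩ σ'.1).card = j + 1) :
    ∃ τ : K.fdex j, τ.1 ⊆ σ.1 ∧ τ.1 ⊆ σ'.1 ∧ σ ≠ σ' := by
  have hmem : σ.1 ∩ σ'.1 ∈ K.faces :=
    K.down_closed σ.1 σ.2.1 _ Finset.inter_subset_left (by rw [← Finset.card_pos, h]; omega)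
  refine ⟨⟨_, hmem, h⟩, Finset.inter_subset_left, Finset.inter_subset_right, ?_⟩
  rintro rfl
  have := σ.2.2
  rw [Finset.inter_self] at h
  omega

lemma exists_units_of_adj (hclosed : ∀ τ : K.fdex j, K.ridgeDeg j τ = 2)
    {σ σ' : K.fdex (j + 1)} (h : (σ.1 ∩ σ'.1).card = j + 1) (a : K.fdex (j + 1) → ℝ) :
    ∃ (τ : K.fdex j) (b b' : ℤˣ), ((K.B j).toReal *ᵥ a) τ = b * a σ + b' * a σ' := by
  obtain ⟨τ, hσ, hσ', hne⟩ := exists_ridge_of_adj h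
  refine ⟨τ, (isUnit_B_of_subset hσ).unit, (isUnit_B_of_subset hσ').unit, ?_⟩
  simpa using toReal_B_mulVec_apply hne (subset_iff_of_ridgeDeg_eq_two (hclosed τ) hne hσ hσ') a

lemma StronglyConnected.forall_of_adj (hsc : K.StronglyConnected j) {P : K.fdex (j + 1) → Prop}
    (step : ∀ σ σ', (σ.1 ∩ σ'.1).card = j + 1 → P σ → P σ') {σ₀ : K.fdex (j + 1)} (h₀ : P σ₀)
    (σ : K.fdex (j + 1)) : P σ := by
  induction hsc σ₀ σ with
  | refl => exact h₀
  | tail _ hadj ih => exact step _ _ hadj ih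

lemma integralityPropagates_B (hclosed : ∀ τ : K.fdex j, K.ridgeDeg j τ = 2)
    (hsc : K.StronglyConnected j) (σ₀ : K.fdex (j + 1)) : (K.B j).IntegralityPropagates σ₀ := by
  intro a ha ha₀
  refine hsc.forall_of_adj (fun σ σ' hadj ⟨m, hm⟩ => ?_) ha₀
  obtain ⟨τ, b, b', hτ⟩ := exists_units_of_adj hclosed hadj a
  obtain ⟨mτ, hmτ⟩ := ha τ
  have hb' : ((b' : ℤ) : ℝ) * (b' : ℤ) = 1 := by exact_mod_cast Int.units_coe_mul_self b'
  rw [hmτ, hm] at hτ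
  exact ⟨b' * (mτ - b * m), by push_cast; linear_combination (-(b' : ℤ) : ℝ) * hτ - a σ' * hb'⟩

lemma exists_units_mul_of_mulVec_eq_zero (hclosed : ∀ τ : K.fdex j, K.ridgeDeg j τ = 2)
    (hsc : K.StronglyConnected j) {z : K.fdex (j + 1) → ℝ} (hz : (K.B j).toReal *ᵥ z = 0)
    (σ₀ σ : K.fdex (j + 1)) : ∃ η : ℤˣ, z σ = η * z σ₀ := by
  refine hsc.forall_of_adj (P := fun σ => ∃ η : ℤˣ, z σ = η * z σ₀) (σ₀ := σ₀)
    (fun σ σ' hadj ⟨η, hη⟩ => ?_) ⟨1, by simp⟩ σ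
  obtain ⟨τ, b, b', hτ⟩ := exists_units_of_adj hclosed hadj z
  have hb' : ((b' : ℤ) : ℝ) * (b' : ℤ) = 1 := by exact_mod_cast Int.units_coe_mul_self b'
  rw [hz, Pi.zero_apply, hη] at hτ
  exact ⟨-(b' * b * η), by push_cast; linear_combination (-(b' : ℤ) : ℝ) * hτ - z σ' * hb'⟩

/-- Across each ridge the entries of a cycle agree up to sign, so by strong connectivity a
nonzero cycle is a multiple of a cycle with entries `±1`. -/
theorem exists_orientation (hclosed : ∀ τ : K.fdex j, K.ridgeDeg j τ = 2)
    (hsc : K.StronglyConnected j) {z : K.fdex (j + 1) → ℤ} (hz : z ≠ 0)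
    (hBz : K.B j *ᵥ z = 0) :
    ∃ ε : K.fdex (j + 1) → ℤˣ, (K.B j).toReal *ᵥ (fun σ => (ε σ : ℝ)) = 0 := by
  obtain ⟨σ₀, hσ₀⟩ := Function.ne_iff.1 hz
  let ζ : K.fdex (j + 1) → ℝ := fun σ => z σ
  have hζ : (K.B j).toReal *ᵥ ζ = 0 := funext fun τ => by
    have := (RingHom.map_mulVec (Int.castRingHom ℝ) (K.B j) z τ).symm
    rwa [hBz, Pi.zero_apply, map_zero] at this
  choose ε hε using exists_units_mul_of_mulVec_eq_zero hclosed hsc hζ σ₀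
  refine ⟨ε, ?_⟩
  have hζε : ζ = ζ σ₀ • fun σ => (ε σ : ℝ) := funext fun σ => by simp [hε σ, mul_comm]
  rw [hζε, mulVec_smul] at hζ
  exact (smul_eq_zero.1 hζ).resolve_left (by simpa [ζ] using hσ₀)

lemma frg_eq_ite {τ : K.fdex j} {σ σ' : K.fdex (j + 1)} (hne : σ ≠ σ')
    (hτ : ∀ σ'', τ.1 ⊆ σ''.1 ↔ σ'' = σ ∨ σ'' = σ') :
    K.frg j σ τ = if (σ'.1 \ τ.1).min ≤ (σ.1 \ τ.1).min then 1 else -1 := by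
  have hcond : (∀ σ'' : K.fdex (j + 1), τ.1 ⊆ σ''.1 → σ'' ≠ σ →
      (σ''.1 \ τ.1).min ≤ (σ.1 \ τ.1).min) ↔ (σ'.1 \ τ.1).min ≤ (σ.1 \ τ.1).min := by
    refine ⟨fun h => h σ' ((hτ σ').2 (Or.inr rfl)) hne.symm, fun h σ'' hσ'' hne'' => ?_⟩
    obtain rfl | rfl := (hτ σ'').1 hσ''
    exacts [absurd rfl hne'', h]
  rw [SC.frg, if_pos ((hτ σ).2 (Or.inl rfl))]
  simp only [hcond]

lemma frg_eq_neg {τ : K.fdex j} {σ σ' : K.fdex (j + 1)} (hne : σ ≠ σ')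
    (hτ : ∀ σ'', τ.1 ⊆ σ''.1 ↔ σ'' = σ ∨ σ'' = σ') :
    K.frg j σ' τ = -K.frg j σ τ ∧ IsUnit (K.frg j σ τ) := by
  have hσ := (hτ σ).2 (Or.inl rfl)
  have hσ' := (hτ σ').2 (Or.inr rfl)
  obtain ⟨v, hv⟩ := exists_sdiff_eq_singleton hσ
  obtain ⟨v', hv'⟩ := exists_sdiff_eq_singleton hσ'
  have hvv' : v ≠ v' := by
    rintro rfl
    apply hne
    rw [Subtype.ext_iff, ← Finset.union_sdiff_of_subset hσ, ← Finset.union_sdiff_of_subset hσ',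
      hv, hv']
  rw [frg_eq_ite hne.symm fun σ'' => (hτ σ'').trans or_comm, frg_eq_ite hne hτ, hv, hv',
    Finset.min_singleton, Finset.min_singleton]
  rcases hvv'.lt_or_gt with h | h <;> simp [h.le, h.not_ge]

/-- In column `τ` both matrices have exactly two nonzero entries, `±1` and of opposite signs:
for `ε σ * ∂ τ σ` because `ε` is a cycle. -/
theorem exists_frg_eq_units_mul (hclosed : ∀ τ : K.fdex j, K.ridgeDeg j τ = 2)
    {ε : K.fdex (j + 1) → ℤˣ} (hε : (K.B j).toReal *ᵥ (fun σ => (ε σ : ℝ)) = 0) :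
    ∃ η : K.fdex j → ℤˣ, ∀ σ τ, K.frg j σ τ = η τ * (ε σ * K.B j τ σ) := by
  suffices ∀ τ, ∃ η : ℤˣ, ∀ σ, K.frg j σ τ = η * (ε σ * K.B j τ σ) by
    choose η hη using this
    exact ⟨η, fun σ τ => hη τ σ⟩
  intro τ
  obtain ⟨σ₁, σ₂, hne, hτ⟩ := exists_facets_of_ridgeDeg_eq_two (hclosed τ)
  obtain ⟨hf, hf₁⟩ := frg_eq_neg hne hτ
  have hu : IsUnit ((ε σ₁ : ℤ) * K.B j τ σ₁) :=
    (ε σ₁).isUnit.mul (isUnit_B_of_subset ((hτ σ₁).2 (Or.inl rfl)))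
  have hu2 := Int.isUnit_mul_self hu
  have hrow : (ε σ₁ : ℤ) * K.B j τ σ₁ + ε σ₂ * K.B j τ σ₂ = 0 := by
    have := congrFun hε τ
    rw [toReal_B_mulVec_apply hne hτ, Pi.zero_apply] at this
    exact_mod_cast (by linear_combination this : (ε σ₁ : ℝ) * K.B j τ σ₁ + ε σ₂ * K.B j τ σ₂ = 0)
  refine ⟨(hf₁.mul hu).unit, fun σ => ?_⟩
  rw [IsUnit.unit_spec]
  by_cases hσ : τ.1 ⊆ σ.1
  · rcases (hτ σ).1 hσ with rfl | rfl
    · linear_combination (-K.frg j σ τ) * hu2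
    · linear_combination hf + K.frg j σ₁ τ * hu2 - K.frg j σ₁ τ * (ε σ₁ * K.B j τ σ₁) * hrow
  · rw [frg_eq_zero_of_not_subset hσ, B_eq_zero_of_not_subset hσ, mul_zero, mul_zero]

theorem uniEquiv_symPoly_B_cycMat (hclosed : ∀ τ : K.fdex j, K.ridgeDeg j τ = 2)
    (hsc : K.StronglyConnected j) {ε : K.fdex (j + 1) → ℤˣ}
    (hε : (K.B j).toReal *ᵥ (fun σ => (ε σ : ℝ)) = 0) (σ₀ : K.fdex (j + 1)) {s : ℕ}
    (hs : Fintype.card (K.fdex (j + 1)) = s) :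
    UniEquiv (symPoly (K.B j)) (symPoly (cycMat s)) := by
  have : Nonempty (K.fdex (j + 1)) := ⟨σ₀⟩
  have : NeZero s := ⟨hs ▸ Fintype.card_ne_zero⟩
  let e := Fintype.equivFinOfCardEq hs
  let C : Matrix (Fin s) (K.fdex (j + 1)) ℤ := Matrix.of fun r σ => ε σ * cycMat s r (e σ)
  have hC : ∀ r σ, C r σ = ε σ * cycMat s r (e σ) := fun _ _ => rfl
  have hεε : ∀ σ, ((ε σ : ℤ) : ℝ) * (ε σ : ℤ) = 1 := fun σ => by
    exact_mod_cast Int.units_coe_mul_self (ε σ)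
  rw [symPoly, symPoly, ← colsPM_eq_of_col_signs e ε hC]
  refine uniEquiv_symPoly_of_integralityPropagates (integralityPropagates_B hclosed hsc σ₀)
    ((integralityPropagates_cycMat _).of_col_signs e ε hC) (u := fun σ => ε σ₀ * ε σ)
    (hεε σ₀) ?_ ?_
  · rw [show (fun σ => ((ε σ₀ : ℤ) : ℝ) * ε σ) = ((ε σ₀ : ℤ) : ℝ) • fun σ => (ε σ : ℝ) from rfl,
      mulVec_smul, hε, smul_zero]
  · rw [toReal_mulVec_of_col_signs e ε hC, ← toReal_cycMat_mulVec_const ((ε σ₀ : ℤ) : ℝ)]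
    congr 1
    funext i
    linear_combination ((ε σ₀ : ℤ) : ℝ) * hεε (e.symm i)

theorem uniEquiv_symPoly_transpose_B_frg (hclosed : ∀ τ : K.fdex j, K.ridgeDeg j τ = 2)
    {ε : K.fdex (j + 1) → ℤˣ} (hε : (K.B j).toReal *ᵥ (fun σ => (ε σ : ℝ)) = 0) :
    UniEquiv (symPoly (K.B j)ᵀ) (symPoly (K.frg j)) := by
  obtain ⟨η, hη⟩ := exists_frg_eq_units_mul hclosed hε
  let D : (K.fdex (j + 1) → ℝ) →ₗ[ℝ] (K.fdex (j + 1) → ℝ) :=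
    (Matrix.diagonal fun σ => (ε σ : ℝ)).mulVecLin
  have hD : ∀ x σ, D x σ = ε σ * x σ := fun x σ => mulVec_diagonal _ x σ
  have hDint : ∀ x, intVec x → intVec (D x) := fun x hx σ => by
    obtain ⟨m, hm⟩ := hx σ
    exact ⟨ε σ * m, by rw [hD, hm]; push_cast; rfl⟩
  have hDD : Function.Involutive D := fun x => funext fun σ => by
    rw [hD, hD, ← mul_assoc, ← Int.cast_mul, Int.units_coe_mul_self, Int.cast_one, one_mul]
  let C : Matrix (K.fdex (j + 1)) (K.fdex j) ℤ := Matrix.of fun σ τ => ε σ * K.B j τ σ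
  have hDC : D '' symPoly (K.B j)ᵀ = symPoly C :=
    image_symPoly D fun τ => funext fun σ => by simp [hD, C]
  have hC : symPoly (K.frg j) = symPoly C := by
    rw [symPoly, symPoly, colsPM_eq_of_col_signs (A' := C) (Equiv.refl _) η hη]
  rw [hC, ← hDC]
  exact uniEquiv_image_linearEquiv (LinearEquiv.ofInvolutive D hDD) hDint hDint _

end SC

theorem stmt17_general (n j s : ℕ) (K : SC n)
    (hsc : K.StronglyConnected j)
    (hclosed : ∀ τ : K.fdex j, K.ridgeDeg j τ = 2)
    (horient : ∃ z : K.fdex (j + 1) → ℤ, z ≠ 0 ∧ (K.B j).mulVec z = 0 ∧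
      ∀ w : K.fdex (j + 1) → ℤ, (K.B j).mulVec w = 0 → ∃ c : ℤ, w = c • z)
    (hs : Fintype.card (K.fdex (j + 1)) = s) :
    UniEquiv (symPoly (K.B j)) (symPoly (cycMat s)) ∧
      UniEquiv (symPoly (K.B j)ᵀ) (symPoly (K.frg j)) := by
  obtain ⟨z, hz, hBz, -⟩ := horient
  obtain ⟨ε, hε⟩ := K.exists_orientation hclosed hsc hz hBz
  obtain ⟨σ₀, -⟩ := Function.ne_iff.1 hz
  exact ⟨K.uniEquiv_symPoly_B_cycMat hclosed hsc hε σ₀ hs,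
    K.uniEquiv_symPoly_transpose_B_frg hclosed hε⟩

/-- Let `Δ` be a `d`-dimensional (`d = j+1 ≥ 1`) orientable
pseudomanifold without boundary with `s` facets and facet-ridge graph `G` (with signed
incidence matrix `K.frg j`). Then `P_Δ` is unimodularly equivalent to the symmetric
edge polytope of the cycle `C_s`, and `P^Δ` is unimodularly equivalent to the
symmetric edge polytope of `G`. -/
theorem stmt17 (n j s : ℕ) (K : SC n) (hdim : K.dimIs (j + 1)) (hpure : K.pure (j + 1))
    (hsc : K.StronglyConnected j)
    (hclosed : ∀ τ : K.fdex j, K.ridgeDeg j τ = 2)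
    (horient : ∃ z : K.fdex (j + 1) → ℤ, z ≠ 0 ∧ (K.B j).mulVec z = 0 ∧
      ∀ w : K.fdex (j + 1) → ℤ, (K.B j).mulVec w = 0 → ∃ c : ℤ, w = c • z)
    (hs : Fintype.card (K.fdex (j + 1)) = s) :
    UniEquiv (symPoly (K.B j)) (symPoly (cycMat s)) ∧
      UniEquiv (symPoly (K.B j)ᵀ) (symPoly (K.frg j)) :=
  stmt17_general n j s K hsc hclosed horient hs
end
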